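/- arXiv:0911.0524 — 4 statements merged into one kernel-verified Lean document; each statement's English description precedes it below -/
import Mathlib

section
/- The relation ≡_M (existence of words x, y with ux =_M xv and yu =_M vy) is an equivalence relation on Σ*. -/
/-- `≡_M` is an equivalence relation on `Σ*`. -/
theorem mconj_equivalence {α M : Type*} [Monoid M]
    (f : List α → M) (hf : ∀ u v : List α, f (u ++ v) = f u * f v) :
    Equivalence (fun u v : List α =>
      ∃ x y : List α, f (u ++ x) = f (x ++ v) ∧ f (y ++ u) = f (v ++ y)) := by
  constructor
  · intro u
    exact ⟨[], [], by simp, by simp⟩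
  · rintro u v ⟨x, y, h1, h2⟩
    exact ⟨y, x, h2.symm, h1.symm⟩
  · rintro u v w ⟨x, y, h1, h2⟩ ⟨x', y', h1', h2'⟩
    refine ⟨x ++ x', y' ++ y, ?_, ?_⟩
    · simp only [hf] at *
      rw [← mul_assoc, h1, mul_assoc, h1', mul_assoc]
    · simp only [hf] at *
      rw [mul_assoc, h2, ← mul_assoc, h2', mul_assoc]
end

section
/- If a rewriting system R is cyclically complete (cyclically terminating and cyclically confluent), then every word w ∈ Σ* has a unique cyclically irreducible form up to cyclic conjugacy; moreover any two cyclic conjugates w and w̃ have the same cyclically irreducible form up to cyclic conjugacy. -/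
/-- `u` and `v` are cyclic conjugates in the free monoid `Σ*`. -/
def CycConj {α : Type*} (u v : List α) : Prop :=
  ∃ x y : List α, u = x ++ y ∧ v = y ++ x

/-- One rewriting step of the rewriting system `R`. -/
def Step {α : Type*} (R : List α → List α → Prop) (u v : List α) : Prop :=
  ∃ l r x y : List α, R l r ∧ u = x ++ l ++ y ∧ v = x ++ r ++ y

/-- One cyclic reduction step: some cyclic conjugate of `u` rewrites to `v`. -/
def CycStep {α : Type*} (R : List α → List α → Prop) (u v : List α) : Prop :=
  ∃ w : List α, CycConj u w ∧ Step R w v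

/-- `u` is cyclically irreducible: `u` and all its cyclic conjugates are irreducible. -/
def CycIrred {α : Type*} (R : List α → List α → Prop) (u : List α) : Prop :=
  ∀ w : List α, CycConj u w → ∀ v : List α, ¬ Step R w v

/-- Equality in the monoid presented by the rewriting system `R`. -/
def MEq {α : Type*} (R : List α → List α → Prop) : List α → List α → Prop :=
  Relation.EqvGen (Step R)

/-- `u ≡_M v` : `u` and `v` are left and right conjugates in the monoid presented by `R`. -/
def MConj {α : Type*} (R : List α → List α → Prop) (u v : List α) : Prop :=
  ∃ x y : List α, MEq R (u ++ x) (x ++ v) ∧ MEq R (y ++ u) (v ++ y)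

lemma cycConj_symm {α : Type*} {u v : List α} (h : CycConj u v) : CycConj v u := by
  obtain ⟨x, y, hu, hv⟩ := h; exact ⟨y, x, hv, hu⟩

lemma cycConj_trans {α : Type*} {u v t : List α} (h1 : CycConj u v) (h2 : CycConj v t) :
    CycConj u t := by
  obtain ⟨x, y, hu, hv⟩ := h1
  obtain ⟨a, b, hv', ht⟩ := h2
  rw [hv] at hv'
  rcases List.append_eq_append_iff.mp hv' with ⟨c, hc1, hc2⟩ | ⟨c, hc1, hc2⟩
  · exact ⟨c, b ++ y, by simp [hu, hc1, hc2], by simp [ht, hc1, hc2]⟩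
  · exact ⟨x ++ a, c, by simp [hu, hc1, hc2], by simp [ht, hc1, hc2]⟩

/-- `CycIrred` is exactly "no `CycStep` out". -/
lemma cycIrred_iff {α : Type*} (R : List α → List α → Prop) (u : List α) :
    CycIrred R u ↔ ∀ v, ¬ CycStep R u v := by
  constructor
  · rintro h v ⟨w, hc, hs⟩
    exact h w hc v hs
  · intro h w hc v hs
    exact h v ⟨w, hc, hs⟩

/-- A `CycStep` from a conjugate is a `CycStep` from the original. -/
lemma cycStep_of_conj {α : Type*} {R : List α → List α → Prop} {w w' v : List α}
    (hc : CycConj w w') (h : CycStep R w' v) : CycStep R w v := by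
  obtain ⟨t, ht, hs⟩ := h
  exact ⟨t, cycConj_trans hc ht, hs⟩

lemma irred_reflTransGen_eq {α : Type*} {R : List α → List α → Prop} {u z : List α}
    (hu : CycIrred R u) (h : Relation.ReflTransGen (CycStep R) u z) : z = u := by
  rcases (h.cases_head) with h | ⟨b, hb, _⟩
  · exact h.symm
  · exact absurd hb ((cycIrred_iff R u).mp hu b)

lemma exists_irred_form {α : Type*} (R : List α → List α → Prop)
    (hterm : ¬ ∃ g : ℕ → List α, ∀ n : ℕ, CycStep R (g n) (g (n + 1)))
    (w : List α) :
    ∃ v : List α, Relation.ReflTransGen (CycStep R) w v ∧ CycIrred R v := by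
  by_contra h
  push_neg at h
  have key : ∀ p : {v // Relation.ReflTransGen (CycStep R) w v},
      ∃ q : {v // Relation.ReflTransGen (CycStep R) w v}, CycStep R p.1 q.1 := by
    rintro ⟨v, hv⟩
    have := h v hv
    rw [cycIrred_iff] at this
    push_neg at this
    obtain ⟨z, hz⟩ := this
    exact ⟨⟨z, hv.tail hz⟩, hz⟩
  choose f hf using key
  refine hterm ⟨fun n => (f^[n] ⟨w, Relation.ReflTransGen.refl⟩).1, fun n => ?_⟩
  show CycStep R (f^[n] ⟨w, Relation.ReflTransGen.refl⟩).1 (f^[n + 1] ⟨w, Relation.ReflTransGen.refl⟩).1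
  rw [Function.iterate_succ_apply']
  exact hf _

/-- a cyclically complete rewriting system gives every word a unique
cyclically irreducible form up to cyclic conjugacy, and cyclic conjugates share it. -/
theorem cycComplete_unique_form {α : Type*} (R : List α → List α → Prop)
    (hterm : ¬ ∃ g : ℕ → List α, ∀ n : ℕ, CycStep R (g n) (g (n + 1)))
    (hconf : ∀ w u v : List α, Relation.ReflTransGen (CycStep R) w u →
      Relation.ReflTransGen (CycStep R) w v →
      ∃ z z' : List α, CycConj z z' ∧ Relation.ReflTransGen (CycStep R) u z ∧
        Relation.ReflTransGen (CycStep R) v z') :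
    (∀ w : List α, ∃ v : List α,
        Relation.ReflTransGen (CycStep R) w v ∧ CycIrred R v) ∧
    (∀ w u v : List α, Relation.ReflTransGen (CycStep R) w u →
        Relation.ReflTransGen (CycStep R) w v →
        CycIrred R u → CycIrred R v → CycConj u v) ∧
    (∀ w w' u v : List α, CycConj w w' →
        Relation.ReflTransGen (CycStep R) w u →
        Relation.ReflTransGen (CycStep R) w' v →
        CycIrred R u → CycIrred R v → CycConj u v) := by
  have uniq : ∀ w u v : List α, Relation.ReflTransGen (CycStep R) w u →
      Relation.ReflTransGen (CycStep R) w v →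
      CycIrred R u → CycIrred R v → CycConj u v := by
    intro w u v hwu hwv hu hv
    obtain ⟨z, z', hzz, huz, hvz⟩ := hconf w u v hwu hwv
    rw [irred_reflTransGen_eq hu huz, irred_reflTransGen_eq hv hvz] at hzz
    exact hzz
  refine ⟨exists_irred_form R hterm, uniq, ?_⟩
  intro w w' u v hww hwu hw'v hu hv
  rcases hw'v.cases_head with h | ⟨b, hb, hbv⟩
  · -- v = w', so w' is cyclically irreducible, hence so is w
    subst h
    have hwirr : CycIrred R w := by
      rw [cycIrred_iff]
      intro z hz
      exact (cycIrred_iff R w').mp hv z (cycStep_of_conj (cycConj_symm hww) hz)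
    rw [irred_reflTransGen_eq hwirr hwu]
    exact hww
  · -- replace the first step from w' by a step from w
    have hwb : CycStep R w b := cycStep_of_conj hww hb
    exact uniq w u v hwu (Relation.ReflTransGen.head hwb hbv) hu hv
end

section
/- If u ↬* v (u cyclically reduces to v in finitely many steps), then u ≡_M v, i.e., u and v are left and right conjugates in M: there exist words x, y with ux =_M xv and yu =_M vy. -/
/-!
If `u = x ++ y` and `y ++ x` rewrites to `v`, then `v =_M y ++ x`, so `u ++ x = x ++ (y ++ x) =_M x ++ v`
and `y ++ u = (y ++ x) ++ y =_M v ++ y`. Since `=_M` is a congruence, the conjugators of consecutive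
steps can be concatenated, which handles a chain of cyclic reductions.
-/

theorem Relation.EqvGen.lift {α β : Type*} {r : α → α → Prop} {p : β → β → Prop} (f : α → β)
    (h : ∀ a b, r a b → p (f a) (f b)) {a b : α} (hab : EqvGen r a b) :
    EqvGen p (f a) (f b) := by
  induction hab with
  | rel a b hab => exact .rel _ _ (h a b hab)
  | refl a => exact .refl _
  | symm a b _ ih => exact .symm _ _ ih
  | trans a b c _ _ ihab ihbc => exact .trans _ _ _ ihab ihbc

section

variable {α : Type*} {R : List α → List α → Prop} {u v w : List α}

theorem Step.append_left (x : List α) (h : Step R u v) : Step R (x ++ u) (x ++ v) := by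
  obtain ⟨l, r, a, b, hR, rfl, rfl⟩ := h
  exact ⟨l, r, x ++ a, b, hR, by simp, by simp⟩

theorem Step.append_right (y : List α) (h : Step R u v) : Step R (u ++ y) (v ++ y) := by
  obtain ⟨l, r, a, b, hR, rfl, rfl⟩ := h
  exact ⟨l, r, a, b ++ y, hR, by simp, by simp⟩

theorem MEq.append_left (x : List α) (h : MEq R u v) : MEq R (x ++ u) (x ++ v) :=
  Relation.EqvGen.lift (x ++ ·) (fun _ _ => Step.append_left x) h

theorem MEq.append_right (y : List α) (h : MEq R u v) : MEq R (u ++ y) (v ++ y) :=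
  Relation.EqvGen.lift (· ++ y) (fun _ _ => Step.append_right y) h

theorem MEq.refl (u : List α) : MEq R u u :=
  Relation.EqvGen.refl u

theorem MEq.trans (huv : MEq R u v) (hvw : MEq R v w) : MEq R u w :=
  Relation.EqvGen.trans _ _ _ huv hvw

theorem MConj.refl (u : List α) : MConj R u u :=
  ⟨[], [], by simpa using MEq.refl u, by simpa using MEq.refl u⟩

theorem MConj.trans (huv : MConj R u v) (hvw : MConj R v w) : MConj R u w := by
  obtain ⟨x₁, y₁, hx₁, hy₁⟩ := huv
  obtain ⟨x₂, y₂, hx₂, hy₂⟩ := hvw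
  refine ⟨x₁ ++ x₂, y₂ ++ y₁, ?_, ?_⟩
  · have h₁ := hx₁.append_right x₂
    have h₂ := hx₂.append_left x₁
    simp only [List.append_assoc] at h₁ h₂ ⊢
    exact h₁.trans h₂
  · have h₁ := hy₁.append_left y₂
    have h₂ := hy₂.append_right y₁
    simp only [List.append_assoc] at h₁ h₂ ⊢
    exact h₁.trans h₂

theorem CycStep.mconj (h : CycStep R u v) : MConj R u v := by
  obtain ⟨w, ⟨x, y, rfl, rfl⟩, hs⟩ := h
  have hv : MEq R (y ++ x) v := Relation.EqvGen.rel _ _ hs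
  refine ⟨x, y, ?_, ?_⟩
  · simpa using hv.append_left x
  · simpa using hv.append_right y

end

/-- `u ↬* v` implies `u ≡_M v`. -/
theorem mconj_of_cycRed {α : Type*} (R : List α → List α → Prop)
    (u v : List α) (h : Relation.ReflTransGen (CycStep R) u v) :
    MConj R u v := by
  induction h with
  | refl => exact MConj.refl u
  | tail _ hstep ih => exact ih.trans hstep.mconj
end

section
/- Let R be a complete rewriting system for M that is also cyclically complete. If u =_M v, then the cyclically irreducible forms of u and v are cyclic conjugates in Σ*. -/
/-!
Since `R` is confluent, `u` and `v` have a common descendant `z`, and rewriting steps are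
cyclic steps, so `z` is a cyclic descendant of both `u` and `v`. Cyclic confluence up to
cyclic conjugacy, applied at `u` and at `v`, yields cyclic descendants of `z` conjugate to
`ρ(u)` and `ρ(v)`; these are again cyclically irreducible, and applied once more at `z` it
shows that they are conjugate to each other.
-/

open Relation

section CyclicConjugacy

variable {α : Type*}

lemma cycConj_iff_isRotated {u v : List α} : CycConj u v ↔ u ~r v := by
  constructor
  · rintro ⟨x, y, rfl, rfl⟩
    exact List.isRotated_append
  · intro h
    obtain ⟨n, hn, rfl⟩ := List.isRotated_iff_mod.mp h
    exact ⟨u.take n, u.drop n, (List.take_append_drop n u).symm, List.rotate_eq_drop_append_take hn⟩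

lemma CycConj.symm {u v : List α} (h : CycConj u v) : CycConj v u :=
  cycConj_iff_isRotated.mpr (cycConj_iff_isRotated.mp h).symm

lemma CycConj.trans {u v w : List α} (h₁ : CycConj u v) (h₂ : CycConj v w) : CycConj u w :=
  cycConj_iff_isRotated.mpr ((cycConj_iff_isRotated.mp h₁).trans (cycConj_iff_isRotated.mp h₂))

end CyclicConjugacy

section Rewriting

variable {α : Type*} {R : List α → List α → Prop}

lemma CycIrred.of_cycConj {u v : List α} (h : CycIrred R u) (huv : CycConj u v) :
    CycIrred R v :=
  fun w hvw x hwx => h w (huv.trans hvw) x hwx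

lemma CycIrred.eq_of_reflTransGen {u v : List α} (h : CycIrred R u)
    (huv : ReflTransGen (CycStep R) u v) : u = v := by
  rcases huv.cases_head with rfl | ⟨w, ⟨c, huc, hcw⟩, -⟩
  · rfl
  · exact (h c huc w hcw).elim

lemma step_le_cycStep : Step R ≤ CycStep R :=
  fun u _ h => ⟨u, ⟨u, [], by simp, by simp⟩, h⟩

lemma join_of_mEq
    (hconf : ∀ w u v : List α, ReflTransGen (Step R) w u → ReflTransGen (Step R) w v →
      ∃ z : List α, ReflTransGen (Step R) u z ∧ ReflTransGen (Step R) v z)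
    {u v : List α} (huv : MEq R u v) : Join (ReflTransGen (Step R)) u v :=
  (equivalence_join hconf).eqvGen_iff.mp <|
    EqvGen.mono (fun _ b h => ⟨b, .single h, .refl⟩) _ _ huv

section CyclicConfluence

variable (hconf : ∀ w u v : List α, ReflTransGen (CycStep R) w u →
  ReflTransGen (CycStep R) w v →
  ∃ z z' : List α, CycConj z z' ∧ ReflTransGen (CycStep R) u z ∧ ReflTransGen (CycStep R) v z')
include hconf

lemma exists_cycConj_of_cycIrred {w a b : List α} (ha : CycIrred R a)
    (hwa : ReflTransGen (CycStep R) w a) (hwb : ReflTransGen (CycStep R) w b) :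
    ∃ a', CycConj a a' ∧ ReflTransGen (CycStep R) b a' := by
  obtain ⟨c, c', hcc', hac, hbc'⟩ := hconf w a b hwa hwb
  obtain rfl := ha.eq_of_reflTransGen hac
  exact ⟨c', hcc', hbc'⟩

lemma cycConj_of_cycIrred {w a b : List α} (ha : CycIrred R a) (hb : CycIrred R b)
    (hwa : ReflTransGen (CycStep R) w a) (hwb : ReflTransGen (CycStep R) w b) :
    CycConj a b := by
  obtain ⟨a', haa', hba'⟩ := exists_cycConj_of_cycIrred hconf ha hwa hwb
  rwa [hb.eq_of_reflTransGen hba']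

end CyclicConfluence

end Rewriting

theorem conj_forms_of_meq_general {α : Type*} (R : List α → List α → Prop)
    (hconfS : ∀ w u v : List α, Relation.ReflTransGen (Step R) w u →
      Relation.ReflTransGen (Step R) w v →
      ∃ z : List α, Relation.ReflTransGen (Step R) u z ∧
        Relation.ReflTransGen (Step R) v z)
    (hconfC : ∀ w u v : List α, Relation.ReflTransGen (CycStep R) w u →
      Relation.ReflTransGen (CycStep R) w v →
      ∃ z z' : List α, CycConj z z' ∧ Relation.ReflTransGen (CycStep R) u z ∧
        Relation.ReflTransGen (CycStep R) v z')
    (u v ru rv : List α) (huv : MEq R u v)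
    (hru : Relation.ReflTransGen (CycStep R) u ru) (hiru : CycIrred R ru)
    (hrv : Relation.ReflTransGen (CycStep R) v rv) (hirv : CycIrred R rv) :
    CycConj ru rv := by
  obtain ⟨z, huz, hvz⟩ := join_of_mEq hconfS huv
  obtain ⟨a, hru_a, hza⟩ :=
    exists_cycConj_of_cycIrred hconfC hiru hru (ReflTransGen.mono step_le_cycStep _ _ huz)
  obtain ⟨b, hrv_b, hzb⟩ :=
    exists_cycConj_of_cycIrred hconfC hirv hrv (ReflTransGen.mono step_le_cycStep _ _ hvz)
  have hab : CycConj a b :=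
    cycConj_of_cycIrred hconfC (hiru.of_cycConj hru_a) (hirv.of_cycConj hrv_b) hza hzb
  exact hru_a.trans (hab.trans hrv_b.symm)

/-- for a complete and cyclically complete rewriting system,
words equal in `M` have cyclically conjugate cyclically irreducible forms. -/
theorem conj_forms_of_meq {α : Type*} (R : List α → List α → Prop)
    (htermS : ¬ ∃ g : ℕ → List α, ∀ n : ℕ, Step R (g n) (g (n + 1)))
    (hconfS : ∀ w u v : List α, Relation.ReflTransGen (Step R) w u →
      Relation.ReflTransGen (Step R) w v →
      ∃ z : List α, Relation.ReflTransGen (Step R) u z ∧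
        Relation.ReflTransGen (Step R) v z)
    (htermC : ¬ ∃ g : ℕ → List α, ∀ n : ℕ, CycStep R (g n) (g (n + 1)))
    (hconfC : ∀ w u v : List α, Relation.ReflTransGen (CycStep R) w u →
      Relation.ReflTransGen (CycStep R) w v →
      ∃ z z' : List α, CycConj z z' ∧ Relation.ReflTransGen (CycStep R) u z ∧
        Relation.ReflTransGen (CycStep R) v z')
    (u v ru rv : List α) (huv : MEq R u v)
    (hru : Relation.ReflTransGen (CycStep R) u ru) (hiru : CycIrred R ru)
    (hrv : Relation.ReflTransGen (CycStep R) v rv) (hirv : CycIrred R rv) :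
    CycConj ru rv :=
  conj_forms_of_meq_general R hconfS hconfC u v ru rv huv hru hiru hrv hirv
end
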